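/- If a finite simple graph G contains an induced matching M such that the set V(M) of vertices incident to edges of M is a vertex cover of G, then θ(G) = im(G). -/

import Mathlib

namespace ThetaPaper

variable {α : Type*} [DecidableEq α]

def delF (X : Finset (Finset α)) (v : α) : Finset (Finset α) :=
  X.filter fun S => v ∉ S

def lkF (X : Finset (Finset α)) (v : α) : Finset (Finset α) :=
  X.filter fun T => v ∉ T ∧ insert v T ∈ X

def vertF (X : Finset (Finset α)) : Finset α := X.biUnion id

def nonConeF (X : Finset (Finset α)) : Finset α :=
  (vertF X).filter fun v => delF X v ≠ lkF X v

lemma delF_card_lt {X : Finset (Finset α)} {v : α} (h : v ∈ nonConeF X) :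
    (delF X v).card < X.card := by
  obtain ⟨A, hA, hvA⟩ := Finset.mem_biUnion.mp (Finset.mem_filter.mp h).1
  refine Finset.card_lt_card ⟨Finset.filter_subset _ _, fun hsub => ?_⟩
  have h2 := hsub hA
  rw [delF, Finset.mem_filter] at h2
  exact h2.2 hvA

lemma lkF_card_lt {X : Finset (Finset α)} {v : α} (h : v ∈ nonConeF X) :
    (lkF X v).card < X.card := by
  obtain ⟨A, hA, hvA⟩ := Finset.mem_biUnion.mp (Finset.mem_filter.mp h).1
  refine Finset.card_lt_card ⟨Finset.filter_subset _ _, fun hsub => ?_⟩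
  have h2 := hsub hA
  rw [lkF, Finset.mem_filter] at h2
  exact h2.2.1 hvA

def theta (X : Finset (Finset α)) : ℕ :=
  if h : (nonConeF X).Nonempty then
    (nonConeF X).attach.inf' (Finset.attach_nonempty_iff.mpr h) fun v =>
      max (theta (delF X v.1)) (theta (lkF X v.1) + 1)
  else 0
termination_by X.card
decreasing_by
  · exact delF_card_lt v.2
  · exact lkF_card_lt v.2

def IsComplex (X : Finset (Finset α)) : Prop :=
  ∀ A ∈ X, ∀ B, B ⊆ A → B ∈ X

/-- `dim(X)`, as an integer: the maximum of `|A| - 1` over faces `A ∈ X`. -/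
noncomputable def dimZ (X : Finset (Finset α)) : ℤ :=
  sSup {d : ℤ | ∃ A ∈ X, d = (A.card : ℤ) - 1}

/-- A circuit (minimal non-face) of `X`. -/
def IsCircuit (X : Finset (Finset α)) (S : Finset α) : Prop :=
  S ∉ X ∧ ∀ T ⊂ S, T ∈ X

/-- A circuit cover of `X`. -/
def IsCircuitCover (X : Finset (Finset α)) (C : Finset α) : Prop :=
  ∀ S : Finset α, IsCircuit X S → (S.card : ℤ) - 1 ≤ ((S ∩ C).card : ℤ)

/-- The circuit cover number `ccn(X)` of a complex with vertex set `V`. -/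
noncomputable def ccnZ (V : Finset α) (X : Finset (Finset α)) : ℤ :=
  sInf {k : ℤ | ∃ C ⊆ V, IsCircuitCover X C ∧
    k = dimZ (X.filter fun A => A ⊆ C) + 1}

/-- The simplicial join. -/
def joinF (X₁ X₂ : Finset (Finset α)) : Finset (Finset α) :=
  X₁.biUnion fun A => X₂.image fun B => A ∪ B

/-- A facet (maximal face) of `X`. -/
def IsFacet (X : Finset (Finset α)) (B : Finset α) : Prop :=
  B ∈ X ∧ ∀ C ∈ X, B ⊆ C → C = B

/-- An elementary `k`-collapse: remove the interval `[A, B]` where `A` is a face of size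
at most `k` contained in the unique facet `B`. -/
def ElemCollapse (k : ℕ) (X Y : Finset (Finset α)) : Prop :=
  ∃ A B : Finset α, A ∈ X ∧ A.card ≤ k ∧ IsFacet X B ∧ A ⊆ B ∧
    (∀ C, IsFacet X C → A ⊆ C → C = B) ∧
    Y = X.filter fun C => ¬ (A ⊆ C ∧ C ⊆ B)

/-- `X` is `k`-collapsible: it reduces to the void complex by elementary `k`-collapses. -/
def Collapsible (k : ℕ) (X : Finset (Finset α)) : Prop :=
  Relation.ReflTransGen (ElemCollapse k) X ∅

/-- The collapsibility number `C(X)`. -/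
noncomputable def collapseNum (X : Finset (Finset α)) : ℕ :=
  sInf {k : ℕ | Collapsible k X}

/-- `k(X)`: the maximum size of a set `{x₁, …, x_k}` of vertices of `X` admitting facets
`A₁, …, A_{k+1}` with `x_i ∉ A_i` and `x_i ∈ A_j` for `i < j`. -/
noncomputable def kNum (X : Finset (Finset α)) : ℕ :=
  sSup {k : ℕ | ∃ (x : Fin k → α) (A : Fin (k + 1) → Finset α),
    Function.Injective x ∧ (∀ i, {x i} ∈ X) ∧ (∀ j, IsFacet X (A j)) ∧
    (∀ i : Fin k, x i ∉ A i.castSucc) ∧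
    (∀ (i : Fin k) (j : Fin (k + 1)), (i : ℕ) < (j : ℕ) → x i ∈ A j)}

/-- Vertex decomposable simplicial complexes. -/
inductive VertexDecomposable : Finset (Finset α) → Prop
  | simplex (S : Finset α) : VertexDecomposable S.powerset
  | shed (X : Finset (Finset α)) (v : α) (hv : {v} ∈ X)
      (hdel : VertexDecomposable (delF X v)) (hlk : VertexDecomposable (lkF X v))
      (hfacet : ∀ B, IsFacet (delF X v) B → IsFacet X B) : VertexDecomposable X

section Graphs

variable {V : Type*} [Fintype V] [DecidableEq V]

open Classical in
/-- The independence complex of a graph, as a `Finset` of faces. -/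
noncomputable def indComplex (G : SimpleGraph V) : Finset (Finset V) :=
  Finset.univ.powerset.filter fun A => ∀ x ∈ A, ∀ y ∈ A, ¬ G.Adj x y

/-- The theta-number of a graph: the theta-number of its independence complex. -/
noncomputable def thetaG (G : SimpleGraph V) : ℕ := theta (indComplex G)

/-- A graph is chordal if it has no induced cycle of length greater than `3`. -/
def Chordal {W : Type*} (G : SimpleGraph W) : Prop :=
  ∀ n : ℕ, 3 < n → IsEmpty (SimpleGraph.cycleGraph n ↪g G)

/-- Contraction of the edge `xy`: the merged vertex is `x`, and `y` becomes isolated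
(isolated vertices are irrelevant for the independence complex/theta-number). -/
def contractEdge (G : SimpleGraph V) (x y : V) : SimpleGraph V where
  Adj a b := a ≠ b ∧ a ≠ y ∧ b ≠ y ∧
    ((a = x ∧ (G.Adj x b ∨ G.Adj y b)) ∨
     (b = x ∧ (G.Adj a x ∨ G.Adj a y)) ∨
     (a ≠ x ∧ b ≠ x ∧ G.Adj a b))
  symm := by
    constructor
    rintro a b ⟨hab, hay, hby, h⟩
    refine ⟨Ne.symm hab, hby, hay, ?_⟩
    rcases h with ⟨ha, h⟩ | ⟨hb, h⟩ | ⟨ha, hb, h⟩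
    · exact Or.inr (Or.inl ⟨ha, h.imp (fun t => t.symm) (fun t => t.symm)⟩)
    · exact Or.inl ⟨hb, h.imp (fun t => t.symm) (fun t => t.symm)⟩
    · exact Or.inr (Or.inr ⟨hb, ha, h.symm⟩)
  loopless := by constructor; rintro a ⟨h, -⟩; exact h rfl

/-- One edge-contraction step: `H` is obtained from `G` by contracting an edge of `G`. -/
def ContractionStep (G H : SimpleGraph V) : Prop :=
  ∃ x y, G.Adj x y ∧ H = contractEdge G x y

/-- A matching of `G` (a set of pairwise disjoint edges). -/
def IsMatching (G : SimpleGraph V) (M : Finset (Sym2 V)) : Prop :=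
  (∀ e ∈ M, e ∈ G.edgeSet) ∧
    ∀ e ∈ M, ∀ f ∈ M, e ≠ f → ∀ x, x ∈ e → x ∉ f

/-- An induced matching of `G`: a matching such that no two vertices belonging to
different edges of it are adjacent. -/
def IsInducedMatching (G : SimpleGraph V) (M : Finset (Sym2 V)) : Prop :=
  IsMatching G M ∧ ∀ e ∈ M, ∀ f ∈ M, e ≠ f → ∀ x ∈ e, ∀ y ∈ f, ¬ G.Adj x y

/-- The induced matching number `im(G)`. -/
noncomputable def inducedMatchingNum (G : SimpleGraph V) : ℕ :=
  sSup {k : ℕ | ∃ M, IsInducedMatching G M ∧ M.card = k}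

/-- A maximal matching. -/
def IsMaximalMatching (G : SimpleGraph V) (M : Finset (Sym2 V)) : Prop :=
  IsMatching G M ∧ ∀ N, IsMatching G N → M ⊆ N → N = M

/-- `min-m(G)`: the minimum size of a maximal matching. -/
noncomputable def minMaximalMatchingNum (G : SimpleGraph V) : ℕ :=
  sInf {k : ℕ | ∃ M, IsMaximalMatching G M ∧ M.card = k}

/-- Independent (stable) sets of a graph. -/
def IsIndepSet (G : SimpleGraph V) (A : Finset V) : Prop :=
  ∀ x ∈ A, ∀ y ∈ A, ¬ G.Adj x y

/-- A vertex cover. -/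
def IsVertexCover (G : SimpleGraph V) (C : Finset V) : Prop :=
  ∀ x y, G.Adj x y → x ∈ C ∨ y ∈ C

/-- `α(G[F])`: the maximum size of an independent set of `G` contained in `F`. -/
noncomputable def indepNumOn (G : SimpleGraph V) (F : Finset V) : ℕ :=
  sSup {k : ℕ | ∃ A ⊆ F, IsIndepSet G A ∧ A.card = k}

/-- The circuit cover number of a graph: `ccn(G) = min{α(G[F]) : F a vertex cover}`. -/
noncomputable def ccnG (G : SimpleGraph V) : ℕ :=
  sInf {k : ℕ | ∃ F, IsVertexCover G F ∧ k = indepNumOn G F}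

open Classical in
/-- The closed neighborhood of a vertex, as a `Finset`. -/
noncomputable def closedNbhd (G : SimpleGraph V) (x : V) : Finset V :=
  Finset.univ.filter fun z => z = x ∨ G.Adj x z

/-- The maximum privacy degree `Γ(G) = max{|N[x] \ N[y]| : xy ∈ E(G)}`. -/
noncomputable def privacyDeg (G : SimpleGraph V) : ℕ :=
  sSup {k : ℕ | ∃ x y, G.Adj x y ∧ k = (closedNbhd G x \ closedNbhd G y).card}

open Classical in
/-- The maximum degree `Δ(G)`. -/
noncomputable def maxDeg (G : SimpleGraph V) : ℕ :=
  sSup {k : ℕ | ∃ v, k = (Finset.univ.filter fun z => G.Adj v z).card}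

end Graphs

open Classical in
/-- `V(M)`: the set of vertices incident to the edges of `M`. -/
noncomputable def matchVerts {V : Type*} [Fintype V] (M : Finset (Sym2 V)) : Finset V :=
  Finset.univ.filter fun x => ∃ e ∈ M, x ∈ e

variable {X : Finset (Finset α)}
/-!
Every graph has `im(G) ≤ θ(G)`: branch at a non-isolated vertex `v`. If `v` is not covered by an
induced matching, the whole matching survives in `G - v`; if `v` lies on its edge `f`, the other
edges survive in `G - N[v]`, because the matching is induced.

Conversely, let `V(M)` cover every edge. Branch at an end `x` of an edge `xy ∈ M`, and then in
`G - x` at `y` (unless `y` is isolated there). Every graph this produces has its edges covered by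
`V(M - xy)`, so induction on the vertex set gives `θ(G) ≤ |M|`. Finally `im(G) = |M|`: sending
each edge of an induced matching to an edge of `M` that it meets is injective.
-/

section Theta

lemma theta_le_max_of_mem_nonConeF {v : α} (hv : v ∈ nonConeF X) :
    theta X ≤ max (theta (delF X v)) (theta (lkF X v) + 1) := by
  rw [theta, dif_pos ⟨v, hv⟩]
  exact Finset.inf'_le _ (Finset.mem_attach _ ⟨v, hv⟩)

lemma le_theta_of_forall_mem_nonConeF {k : ℕ} (h : (nonConeF X).Nonempty)
    (hk : ∀ v ∈ nonConeF X, k ≤ max (theta (delF X v)) (theta (lkF X v) + 1)) :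
    k ≤ theta X := by
  rw [theta, dif_pos h]
  exact Finset.le_inf' _ _ fun v _ => hk v.1 v.2

lemma theta_eq_zero_of_nonConeF_eq_empty (h : nonConeF X = ∅) : theta X = 0 := by
  rw [theta, dif_neg (Finset.not_nonempty_iff_eq_empty.mpr h)]

end Theta

section IndependenceComplex

variable {V : Type*} [DecidableEq V] {G : SimpleGraph V}

open Classical in
noncomputable def indComplexOn (G : SimpleGraph V) (S : Finset V) : Finset (Finset V) :=
  S.powerset.filter fun A => G.IsIndepSet (A : Set V)

lemma mem_indComplexOn {S A : Finset V} :
    A ∈ indComplexOn G S ↔ A ⊆ S ∧ G.IsIndepSet (A : Set V) := by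
  simp [indComplexOn]

lemma singleton_mem_indComplexOn {S : Finset V} {u : V} : {u} ∈ indComplexOn G S ↔ u ∈ S := by
  simp [mem_indComplexOn]

lemma mem_vertF_indComplexOn {S : Finset V} {v : V} :
    v ∈ vertF (indComplexOn G S) ↔ v ∈ S := by
  simp only [vertF, Finset.mem_biUnion, id]
  exact ⟨fun ⟨A, hA, hvA⟩ => (mem_indComplexOn.mp hA).1 hvA,
    fun hv => ⟨{v}, singleton_mem_indComplexOn.mpr hv, Finset.mem_singleton_self v⟩⟩

lemma delF_indComplexOn (S : Finset V) (v : V) :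
    delF (indComplexOn G S) v = indComplexOn G (S.erase v) := by
  ext T
  simp only [delF, Finset.mem_filter, mem_indComplexOn, Finset.subset_erase]
  tauto

variable [Fintype V]

lemma indComplex_eq_indComplexOn_univ (G : SimpleGraph V) :
    indComplex G = indComplexOn G Finset.univ := by
  ext A
  simp only [indComplex, Finset.mem_filter, Finset.mem_powerset, mem_indComplexOn]
  exact and_congr_right fun _ =>
    ⟨fun h _ hx _ hy _ => h _ hx _ hy, fun h _ hx _ hy hxy => h hx hy hxy.ne hxy⟩

lemma mem_closedNbhd {x z : V} : z ∈ closedNbhd G x ↔ z = x ∨ G.Adj x z := by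
  simp [closedNbhd]

lemma sdiff_closedNbhd_ssubset {S : Finset V} {v : V} (hv : v ∈ S) : S \ closedNbhd G v ⊂ S :=
  (Finset.ssubset_iff_of_subset Finset.sdiff_subset).mpr
    ⟨v, hv, fun h => (Finset.mem_sdiff.mp h).2 (mem_closedNbhd.mpr (Or.inl rfl))⟩

lemma lkF_indComplexOn {S : Finset V} {v : V} (hv : v ∈ S) :
    lkF (indComplexOn G S) v = indComplexOn G (S \ closedNbhd G v) := by
  ext T
  simp only [lkF, Finset.mem_filter, mem_indComplexOn, Finset.subset_sdiff,
    Finset.insert_subset_iff, Finset.coe_insert, Set.pairwise_insert, Finset.disjoint_left,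
    mem_closedNbhd, Finset.mem_coe, G.adj_comm]
  grind

lemma mem_nonConeF_indComplexOn {S : Finset V} {v : V} :
    v ∈ nonConeF (indComplexOn G S) ↔ v ∈ S ∧ ∃ u ∈ S, G.Adj v u := by
  simp only [nonConeF, Finset.mem_filter, mem_vertF_indComplexOn]
  refine and_congr_right fun hv => ?_
  rw [delF_indComplexOn, lkF_indComplexOn hv]
  constructor
  · intro hne
    by_contra! hno
    refine hne (congrArg _ (Finset.ext fun u => ?_))
    simp only [Finset.mem_erase, Finset.mem_sdiff, mem_closedNbhd]
    grind
  · rintro ⟨u, hu, hvu⟩ heq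
    have hu' : {u} ∈ indComplexOn G (S.erase v) :=
      singleton_mem_indComplexOn.mpr (Finset.mem_erase.mpr ⟨hvu.ne', hu⟩)
    rw [heq, singleton_mem_indComplexOn, Finset.mem_sdiff, mem_closedNbhd] at hu'
    exact hu'.2 (Or.inr hvu)

end IndependenceComplex

section InducedMatching

variable {V : Type*} {G : SimpleGraph V}

def IsVertexCoverOn (G : SimpleGraph V) (S C : Finset V) : Prop :=
  ∀ a ∈ S, ∀ b ∈ S, G.Adj a b → a ∈ C ∨ b ∈ C

lemma IsVertexCover.isVertexCoverOn {C : Finset V} (h : IsVertexCover G C) (S : Finset V) :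
    IsVertexCoverOn G S C :=
  fun a _ b _ hab => h a b hab

lemma IsVertexCoverOn.mono {S T C : Finset V} (h : IsVertexCoverOn G S C) (hTS : T ⊆ S) :
    IsVertexCoverOn G T C :=
  fun a ha b hb hab => h a (hTS ha) b (hTS hb) hab

lemma IsInducedMatching.subset {M N : Finset (Sym2 V)} (hM : IsInducedMatching G M)
    (hNM : N ⊆ M) : IsInducedMatching G N :=
  ⟨⟨fun e he => hM.1.1 e (hNM he), fun e he f hf => hM.1.2 e (hNM he) f (hNM hf)⟩,
    fun e he f hf => hM.2 e (hNM he) f (hNM hf)⟩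

variable [Fintype V]

lemma mem_matchVerts {M : Finset (Sym2 V)} {x : V} :
    x ∈ matchVerts M ↔ ∃ e ∈ M, x ∈ e := by
  simp [matchVerts]

lemma matchVerts_mono {M N : Finset (Sym2 V)} (h : N ⊆ M) : matchVerts N ⊆ matchVerts M :=
  fun _ hx => mem_matchVerts.mpr ((mem_matchVerts.mp hx).imp fun _ he => ⟨h he.1, he.2⟩)

variable [DecidableEq V]

lemma disjoint_matchVerts_erase_closedNbhd {M : Finset (Sym2 V)} (hM : IsInducedMatching G M)
    {e : Sym2 V} (he : e ∈ M) {v : V} (hv : v ∈ e) :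
    Disjoint (matchVerts (M.erase e)) (closedNbhd G v) := by
  refine Finset.disjoint_left.mpr fun u hu huv => ?_
  obtain ⟨f, hf, huf⟩ := mem_matchVerts.mp hu
  obtain ⟨hfe, hfM⟩ := Finset.mem_erase.mp hf
  rcases mem_closedNbhd.mp huv with rfl | hvu
  · exact hM.1.2 e he f hfM hfe.symm u hv huf
  · exact hM.2 e he f hfM hfe.symm v hv u huf hvu

lemma IsVertexCoverOn.matchVerts_erase {S : Finset V} {M : Finset (Sym2 V)}
    (hcov : IsVertexCoverOn G S (matchVerts M)) {e : Sym2 V}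
    (he : ∀ a ∈ S, a ∈ e → ∀ b ∈ S, ¬ G.Adj a b) :
    IsVertexCoverOn G S (matchVerts (M.erase e)) := by
  have hkeep : ∀ a ∈ S, ∀ b ∈ S, G.Adj a b → a ∈ matchVerts M →
      a ∈ matchVerts (M.erase e) := by
    intro a ha b hb hab haM
    obtain ⟨f, hf, haf⟩ := mem_matchVerts.mp haM
    refine mem_matchVerts.mpr ⟨f, Finset.mem_erase.mpr ⟨?_, hf⟩, haf⟩
    rintro rfl
    exact he a ha haf b hb hab
  intro a ha b hb hab
  exact (hcov a ha b hb hab).imp (hkeep a ha b hb hab) (hkeep b hb a ha hab.symm)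

lemma IsVertexCoverOn.matchVerts_erase_of_notMem {S T : Finset V} {M : Finset (Sym2 V)}
    (hcov : IsVertexCoverOn G S (matchVerts M)) (hTS : T ⊆ S) {x y : V} (hx : x ∉ T)
    (hy : y ∉ T) : IsVertexCoverOn G T (matchVerts (M.erase s(x, y))) :=
  (hcov.mono hTS).matchVerts_erase fun a ha hxya => by
    rcases Sym2.mem_iff.mp hxya with rfl | rfl <;> contradiction

lemma IsVertexCoverOn.exists_mem_nonConeF_mem_matchVerts {S : Finset V} {M : Finset (Sym2 V)}
    (hcov : IsVertexCoverOn G S (matchVerts M)) (h : (nonConeF (indComplexOn G S)).Nonempty) :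
    ∃ x ∈ nonConeF (indComplexOn G S), x ∈ matchVerts M := by
  obtain ⟨w, hw⟩ := h
  obtain ⟨hwS, u, huS, hwu⟩ := mem_nonConeF_indComplexOn.mp hw
  rcases hcov w hwS u huS hwu with h | h
  · exact ⟨w, hw, h⟩
  · exact ⟨u, mem_nonConeF_indComplexOn.mpr ⟨huS, w, hwS, hwu.symm⟩, h⟩

lemma card_le_theta_indComplexOn {S : Finset V} {M : Finset (Sym2 V)}
    (hM : IsInducedMatching G M) (hMS : matchVerts M ⊆ S) :
    M.card ≤ theta (indComplexOn G S) := by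
  induction S using Finset.strongInduction generalizing M with
  | _ S IH =>
  rcases M.eq_empty_or_nonempty with rfl | ⟨e, he⟩
  · simp
  obtain ⟨x, y⟩ := e
  have hS : ∀ {z}, z ∈ s(x, y) → z ∈ S := fun hz => hMS (mem_matchVerts.mpr ⟨_, he, hz⟩)
  have hx : x ∈ nonConeF (indComplexOn G S) := mem_nonConeF_indComplexOn.mpr
    ⟨hS (Sym2.mem_mk_left x y), y, hS (Sym2.mem_mk_right x y), hM.1.1 _ he⟩
  refine le_theta_of_forall_mem_nonConeF ⟨x, hx⟩ fun v hv => ?_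
  have hvS := (mem_nonConeF_indComplexOn.mp hv).1
  rw [delF_indComplexOn, lkF_indComplexOn hvS]
  by_cases hvM : v ∈ matchVerts M
  · obtain ⟨f, hf, hvf⟩ := mem_matchVerts.mp hvM
    have hsub : matchVerts (M.erase f) ⊆ S \ closedNbhd G v :=
      Finset.subset_sdiff.mpr ⟨(matchVerts_mono (M.erase_subset f)).trans hMS,
        disjoint_matchVerts_erase_closedNbhd hM hf hvf⟩
    have := IH _ (sdiff_closedNbhd_ssubset hvS) (hM.subset (M.erase_subset f)) hsub
    have := Finset.card_erase_add_one hf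
    omega
  · have hsub : matchVerts M ⊆ S.erase v := fun u hu =>
      Finset.mem_erase.mpr ⟨fun h => hvM (h ▸ hu), hMS hu⟩
    exact (IH _ (Finset.erase_ssubset hvS) hM hsub).trans (le_max_left _ _)

lemma theta_indComplexOn_le_card {S : Finset V} {M : Finset (Sym2 V)}
    (hM : IsInducedMatching G M) (hcov : IsVertexCoverOn G S (matchVerts M)) :
    theta (indComplexOn G S) ≤ M.card := by
  induction S using Finset.strongInduction generalizing M with
  | _ S IH =>
  rcases (nonConeF (indComplexOn G S)).eq_empty_or_nonempty with h | h
  · simp [theta_eq_zero_of_nonConeF_eq_empty h]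
  obtain ⟨x, hx, hxM⟩ := hcov.exists_mem_nonConeF_mem_matchVerts h
  obtain ⟨e, he, hxe⟩ := mem_matchVerts.mp hxM
  obtain ⟨y, rfl⟩ := Sym2.mem_iff_exists.mp hxe
  have hxS := (mem_nonConeF_indComplexOn.mp hx).1
  have hxy : G.Adj x y := hM.1.1 _ he
  have IH' : ∀ T ⊂ S, IsVertexCoverOn G T (matchVerts (M.erase s(x, y))) →
      theta (indComplexOn G T) + 1 ≤ M.card := fun T hT hcovT => by
    have := IH T hT (hM.subset (M.erase_subset _)) hcovT
    have := Finset.card_erase_add_one he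
    omega
  have hlk : theta (indComplexOn G (S \ closedNbhd G x)) + 1 ≤ M.card :=
    IH' _ (sdiff_closedNbhd_ssubset hxS) (hcov.matchVerts_erase_of_notMem
      Finset.sdiff_subset (by simp [mem_closedNbhd]) (by simp [mem_closedNbhd, hxy]))
  have hdel : theta (indComplexOn G (S.erase x)) ≤ M.card := by
    have hSx : S.erase x ⊂ S := Finset.erase_ssubset hxS
    by_cases hy : y ∈ nonConeF (indComplexOn G (S.erase x))
    · -- branch at `y` as well: both resulting sets avoid `x` and `y`
      refine (theta_le_max_of_mem_nonConeF hy).trans (max_le ?_ ?_)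
      · have hT : (S.erase x).erase y ⊂ S := (Finset.erase_subset _ _).trans_ssubset hSx
        have := IH' _ hT (hcov.matchVerts_erase_of_notMem hT.subset (by simp) (by simp))
        rw [delF_indComplexOn]
        omega
      · have hT : S.erase x \ closedNbhd G y ⊂ S := Finset.sdiff_subset.trans_ssubset hSx
        have := IH' _ hT (hcov.matchVerts_erase_of_notMem hT.subset (by simp)
          (by simp [mem_closedNbhd]))
        rw [lkF_indComplexOn (mem_nonConeF_indComplexOn.mp hy).1]
        omega
    · -- otherwise `y` is isolated in `S - x`, so no edge there meets `xy`
      have := IH' _ hSx ((hcov.mono hSx.subset).matchVerts_erase fun a ha hxya b hb hab => ?_)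
      · omega
      rcases Sym2.mem_iff.mp hxya with rfl | rfl
      · simp at ha
      · exact hy (mem_nonConeF_indComplexOn.mpr ⟨ha, b, hb, hab⟩)
  refine (theta_le_max_of_mem_nonConeF hx).trans ?_
  rw [delF_indComplexOn, lkF_indComplexOn hxS]
  exact max_le hdel (by omega)

-- Two edges of `M'` meeting the same edge of `M` would share a vertex or be joined by that edge.
lemma card_le_card_of_isVertexCover_matchVerts {M M' : Finset (Sym2 V)}
    (hM : ∀ e ∈ M, e ∈ G.edgeSet) (hcov : IsVertexCover G (matchVerts M))
    (hM' : IsInducedMatching G M') : M'.card ≤ M.card := by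
  have meets : ∀ e' ∈ M', ∃ g ∈ M, ∃ w ∈ g, w ∈ e' := by
    rintro ⟨a, b⟩ he'
    rcases hcov a b (hM'.1.1 _ he') with h | h <;> obtain ⟨g, hg, hwg⟩ := mem_matchVerts.mp h
    · exact ⟨g, hg, a, hwg, Sym2.mem_mk_left a b⟩
    · exact ⟨g, hg, b, hwg, Sym2.mem_mk_right a b⟩
  choose! f hfM hfw using meets
  refine Finset.card_le_card_of_injOn f hfM fun e₁ he₁ e₂ he₂ hf => ?_
  obtain ⟨w₁, hw₁f, hw₁e⟩ := hfw e₁ he₁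
  obtain ⟨w₂, hw₂f, hw₂e⟩ := hfw e₂ he₂
  rw [← hf] at hw₂f
  by_contra hne
  by_cases hw : w₁ = w₂
  · exact hM'.1.2 e₁ he₁ e₂ he₂ hne w₁ hw₁e (hw ▸ hw₂e)
  · have hf₁ : f e₁ = s(w₁, w₂) := (Sym2.mem_and_mem_iff hw).mp ⟨hw₁f, hw₂f⟩
    have hadj : G.Adj w₁ w₂ := by simpa [hf₁] using hM _ (hfM e₁ he₁)
    exact hM'.2 e₁ he₁ e₂ he₂ hne w₁ hw₁e w₂ hw₂e hadj

lemma inducedMatchingNum_eq_card {M : Finset (Sym2 V)} (hM : IsInducedMatching G M)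
    (hcov : IsVertexCover G (matchVerts M)) : inducedMatchingNum G = M.card :=
  IsGreatest.csSup_eq ⟨⟨M, hM, rfl⟩, by
    rintro _ ⟨M', hM', rfl⟩
    exact card_le_card_of_isVertexCover_matchVerts hM.1.1 hcov hM'⟩

end InducedMatching

theorem theta_eq_im_of_dominating_inducedMatching {V : Type*} [Fintype V] [DecidableEq V] (G : SimpleGraph V)
    {M : Finset (Sym2 V)} (hM : IsInducedMatching G M)
    (hcov : IsVertexCover G (matchVerts M)) :
    thetaG G = inducedMatchingNum G := by
  have hθ : thetaG G = M.card := by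
    rw [thetaG, indComplex_eq_indComplexOn_univ]
    exact le_antisymm (theta_indComplexOn_le_card hM (hcov.isVertexCoverOn _))
      (card_le_theta_indComplexOn hM (Finset.subset_univ _))
  rw [hθ, inducedMatchingNum_eq_card hM hcov]

end ThetaPaper
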